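/- arXiv:math/0702209 — 3 statements merged into one kernel-verified Lean document; each statement's English description precedes it below -/
import Mathlib

section
/- Let ν ≥ 2 be an integer and α ∈ ℝ^ν. For every complex number s with Re(s) > 0, the Möbius inversion identity Σ_{m=1}^∞ μ(m) · Σ_{n ∈ ℤ^ν \ {0}} Σ_{ℓ=1}^∞ (1/ℓ) e^{2πi ℓ m (n·α)} e^{-m s ℓ |n|} = Σ_{p ∈ ℤ^ν, gcd(p)=1} Σ_{ℓ=1}^∞ (1/ℓ) e^{2πi ℓ (p·α)} e^{-s ℓ |p|} holds, i.e. log L_{√+²}(s,α) = Σ_{m=1}^∞ μ(m) log G(ms, mα), where all series converge absolutely. -/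
/-
Every nonzero `n ∈ ℤ^ν` is uniquely `d • p` with `d ≥ 1` and `p` primitive. The summands on
both sides are `ℓ⁻¹ w(n)^{mℓ}` with `w(n) = e^{2πi n·α} e^{-s|n|}`, and `w(d • p) = w(p)^d`.
Writing `L(z) = ∑ z^ℓ/ℓ = -log(1 - z)`, the left side is therefore
`∑_p ∑_{m,d} μ(m) L(w(p)^{md})`, and `∑_{m ∣ k} μ(m) = [k = 1]` collapses the inner sum to
`L(w(p))`. The rearrangements are justified by absolute convergence: `|w(n)| = e^{-σ|n|}` with
`σ = Re s > 0` and `|L(z)| ≤ |z|/(1 - |z|)`, so everything is dominated by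
`∑_{p,m,d} e^{-σ m d |p|}`, which converges because `xy ≥ (x + y)/2` for `x, y ≥ 1`.
-/

open Finset ArithmeticFunction Complex
open scoped ArithmeticFunction.Moebius

theorem summable_pi_prod {ι κ : Type*} [Fintype ι] {g : κ → ℝ} (hg0 : ∀ k, 0 ≤ g k)
    (hg : Summable g) : Summable fun x : ι → κ => ∏ i, g (x i) := by
  classical
  refine summable_of_sum_le (c := ∏ _i : ι, ∑' k, g k)
    (fun x => prod_nonneg fun i _ => hg0 (x i)) fun u => ?_
  calc ∑ x ∈ u, ∏ i, g (x i)
      ≤ ∑ x ∈ Fintype.piFinset fun i => u.image (· i), ∏ i, g (x i) :=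
        sum_le_sum_of_subset_of_nonneg
          (fun x hx => Fintype.mem_piFinset.2 fun i => mem_image_of_mem _ hx)
          fun x _ _ => prod_nonneg fun i _ => hg0 (x i)
    _ = ∏ i, ∑ k ∈ u.image (· i), g k := (prod_univ_sum _ _).symm
    _ ≤ ∏ _i : ι, ∑' k, g k :=
        prod_le_prod (fun i _ => sum_nonneg fun k _ => hg0 k)
          fun i _ => hg.sum_le_tsum _ fun k _ => hg0 k

def SummableExpNeg {α : Type*} (φ : α → ℝ) : Prop :=
  ∀ c : ℝ, 0 < c → Summable fun x => Real.exp (-(c * φ x))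

namespace SummableExpNeg

variable {α β : Type*} {φ : α → ℝ} {ψ : β → ℝ}

theorem of_le {χ : α → ℝ} (hφ : SummableExpNeg φ) {a : ℝ} (ha : 0 < a)
    (hle : ∀ x, a * φ x ≤ χ x) : SummableExpNeg χ := fun c hc =>
  (hφ (c * a) (mul_pos hc ha)).of_nonneg_of_le (fun _ => (Real.exp_pos _).le) fun x =>
    Real.exp_le_exp.2 <| by nlinarith [hle x]

theorem comp_injective (hφ : SummableExpNeg φ) {f : β → α} (hf : Function.Injective f) :
    SummableExpNeg (φ ∘ f) := fun c hc => (hφ c hc).comp_injective hf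

theorem prod_add (hφ : SummableExpNeg φ) (hψ : SummableExpNeg ψ) :
    SummableExpNeg fun z : α × β => φ z.1 + ψ z.2 := fun c hc =>
  ((hφ c hc).mul_of_nonneg (hψ c hc) (fun _ => (Real.exp_pos _).le)
    fun _ => (Real.exp_pos _).le).congr fun z => by
      simp only [mul_add, neg_add, Real.exp_add]

theorem prod_mul (hφ : SummableExpNeg φ) (hψ : SummableExpNeg ψ) (hφ1 : ∀ x, 1 ≤ φ x)
    (hψ1 : ∀ y, 1 ≤ ψ y) : SummableExpNeg fun z : α × β => φ z.1 * ψ z.2 :=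
  (hφ.prod_add hψ).of_le one_half_pos fun z => by nlinarith [hφ1 z.1, hψ1 z.2]

end SummableExpNeg

theorem summableExpNeg_natCast : SummableExpNeg fun n : ℕ => (n : ℝ) := fun c hc =>
  (Real.summable_exp_nat_mul_iff.2 (neg_lt_zero.2 hc)).congr fun n => by ring_nf

theorem summableExpNeg_pnatCast : SummableExpNeg fun n : ℕ+ => ((n : ℕ) : ℝ) :=
  summableExpNeg_natCast.comp_injective PNat.coe_injective

theorem summableExpNeg_abs_intCast : SummableExpNeg fun n : ℤ => |(n : ℝ)| := fun c hc =>
  .of_nat_of_neg (by simpa using summableExpNeg_natCast c hc)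
    (by simpa using summableExpNeg_natCast c hc)

theorem summableExpNeg_sum_abs {ι : Type*} [Fintype ι] :
    SummableExpNeg fun n : ι → ℤ => ∑ i, |(n i : ℝ)| := fun c hc =>
  (summable_pi_prod (fun _ => (Real.exp_pos _).le) (summableExpNeg_abs_intCast c hc)).congr
    fun n => by rw [← Real.exp_sum, mul_sum, sum_neg_distrib]

theorem sum_divisorsAntidiagonal_moebius {R : Type*} [Ring R] (k : ℕ) :
    ∑ x ∈ k.divisorsAntidiagonal, ((μ x.1 : ℤ) : R) = if k = 1 then 1 else 0 := by
  have h := congrArg (· k) (coe_moebius_mul_coe_zeta (R := R))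
  simp only [coe_mul_zeta_apply, one_apply, intCoe_apply] at h
  rw [Nat.sum_divisorsAntidiagonal (fun a _ => ((μ a : ℤ) : R)), h]

theorem tsum_moebius_mul_mul {R : Type*} [Ring R] [TopologicalSpace R] [ContinuousAdd R] [T3Space R]
    (g : ℕ+ → R)
    (hg : Summable fun x : ℕ+ × ℕ+ => ((μ x.1 : ℤ) : R) * g (x.1 * x.2)) :
    ∑' x : ℕ+ × ℕ+, ((μ x.1 : ℤ) : R) * g (x.1 * x.2) = g 1 := by
  set F := fun x : ℕ+ × ℕ+ => ((μ x.1 : ℤ) : R) * g (x.1 * x.2)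
  have hfiber (k : ℕ+) : ∑' c : (k : ℕ).divisorsAntidiagonal,
      F (sigmaAntidiagonalEquivProd ⟨k, c⟩) = if k = 1 then g 1 else 0 := by
    have hk (c : (k : ℕ).divisorsAntidiagonal) :
        (sigmaAntidiagonalEquivProd ⟨k, c⟩).1 * (sigmaAntidiagonalEquivProd ⟨k, c⟩).2 = k :=
      PNat.eq (divisorsAntidiagonalFactors_eq c)
    have hμ : ∑ c : (k : ℕ).divisorsAntidiagonal,
        ((μ (sigmaAntidiagonalEquivProd ⟨k, c⟩).1 : ℤ) : R) = if (k : ℕ) = 1 then 1 else 0 :=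
      (sum_coe_sort _ fun x : ℕ × ℕ => ((μ x.1 : ℤ) : R)).trans
        (sum_divisorsAntidiagonal_moebius k)
    simp only [F, hk, tsum_fintype, ← sum_mul, hμ, ite_mul, one_mul, zero_mul,
      PNat.coe_eq_one_iff]
    split_ifs with h <;> simp [h]
  calc ∑' x, F x = ∑' c, F (sigmaAntidiagonalEquivProd c) :=
        (sigmaAntidiagonalEquivProd.tsum_eq F).symm
    _ = ∑' (k : ℕ+) (c : (k : ℕ).divisorsAntidiagonal), F (sigmaAntidiagonalEquivProd ⟨k, c⟩) :=
        (sigmaAntidiagonalEquivProd.summable_iff.2 hg).tsum_sigma' fun _ => .of_finite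
    _ = g 1 := by simp only [hfiber, tsum_ite_eq]

-- the Taylor series of `-log (1 - z)`, i.e. the logarithms in the paper's `G` and `L_{√+²}`
noncomputable def negLogOneSub (z : ℂ) : ℂ := ∑' ℓ : ℕ+, ((ℓ : ℕ) : ℂ)⁻¹ * z ^ (ℓ : ℕ)

theorem norm_negLogOneSub_le {z : ℂ} (hz : ‖z‖ < 1) : ‖negLogOneSub z‖ ≤ ‖z‖ / (1 - ‖z‖) := by
  have hgeom : HasSum (fun ℓ : ℕ+ => ‖z‖ ^ (ℓ : ℕ)) (‖z‖ / (1 - ‖z‖)) := by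
    rw [← Equiv.pnatEquivNat.symm.hasSum_iff, div_eq_mul_inv]
    simpa [Function.comp_def, pow_succ'] using
      (hasSum_geometric_of_lt_one (norm_nonneg z) hz).mul_left ‖z‖
  refine tsum_of_norm_bounded hgeom fun ℓ => ?_
  rw [norm_mul, norm_inv, norm_pow, Complex.norm_natCast]
  exact mul_le_of_le_one_left (by positivity) (inv_le_one_of_one_le₀ (by exact_mod_cast ℓ.pos))

theorem summable_moebius_mul_negLogOneSub_pow {P : Type*} {q : P → ℂ} {φ : P → ℝ} {σ : ℝ}
    (hσ : 0 < σ) (hφ : SummableExpNeg φ) (hφ1 : ∀ p, 1 ≤ φ p)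
    (hq : ∀ p, ‖q p‖ ≤ Real.exp (-(σ * φ p))) :
    Summable fun x : P × (ℕ+ × ℕ+) =>
      ((μ x.2.1 : ℤ) : ℂ) * negLogOneSub (q x.1 ^ ((x.2.1 * x.2.2 : ℕ+) : ℕ)) := by
  have hone_le (m : ℕ+) : (1 : ℝ) ≤ (m : ℕ) := by exact_mod_cast m.pos
  have hdecay :=
    hφ.prod_mul (summableExpNeg_pnatCast.prod_mul summableExpNeg_pnatCast hone_le hone_le) hφ1
      fun md => one_le_mul_of_one_le_of_one_le (hone_le md.1) (hone_le md.2)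
  have hr : Real.exp (-σ) < 1 := Real.exp_lt_one_iff.2 (neg_neg_of_pos hσ)
  refine .of_norm_bounded ((hdecay σ hσ).mul_left (1 - Real.exp (-σ))⁻¹) fun ⟨p, m, d⟩ => ?_
  set t := φ p * ((m : ℕ) * (d : ℕ) : ℝ) with ht_def
  have ht : 1 ≤ t := one_le_mul_of_one_le_of_one_le (hφ1 p)
    (one_le_mul_of_one_le_of_one_le (hone_le m) (hone_le d))
  have hw : ‖q p ^ ((m * d : ℕ+) : ℕ)‖ ≤ Real.exp (-(σ * t)) := by
    rw [norm_pow]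
    calc ‖q p‖ ^ ((m * d : ℕ+) : ℕ) ≤ Real.exp (-(σ * φ p)) ^ ((m * d : ℕ+) : ℕ) :=
          pow_le_pow_left₀ (norm_nonneg _) (hq p) _
      _ = Real.exp (-(σ * t)) := by
          rw [← Real.exp_nat_mul, PNat.mul_coe, ht_def]; push_cast; ring_nf
  have hwr : ‖q p ^ ((m * d : ℕ+) : ℕ)‖ ≤ Real.exp (-σ) :=
    hw.trans (Real.exp_le_exp.2 (by nlinarith))
  have hμ : ‖((μ m : ℤ) : ℂ)‖ ≤ 1 := by
    rw [Complex.norm_intCast]; exact_mod_cast abs_moebius_le_one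
  calc ‖((μ m : ℤ) : ℂ) * negLogOneSub (q p ^ ((m * d : ℕ+) : ℕ))‖
      ≤ 1 * (‖q p ^ ((m * d : ℕ+) : ℕ)‖ / (1 - ‖q p ^ ((m * d : ℕ+) : ℕ)‖)) := by
        rw [norm_mul]
        exact mul_le_mul hμ (norm_negLogOneSub_le (hwr.trans_lt hr)) (norm_nonneg _) zero_le_one
    _ ≤ Real.exp (-(σ * t)) / (1 - Real.exp (-σ)) := by
        rw [one_mul]
        gcongr
    _ = _ := by rw [div_eq_inv_mul]

namespace IntVec

variable {ι : Type*} [Fintype ι]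

def content (n : ι → ℤ) : ℕ := univ.gcd fun i => (n i).natAbs

theorem content_nsmul (d : ℕ) (n : ι → ℤ) : content (d • n) = d * content n := by
  simp only [content, Pi.smul_apply, nsmul_eq_mul, Int.natAbs_mul, Int.natAbs_natCast]
  rw [Finset.gcd_mul_left, normalize_eq]

theorem content_eq_zero_iff {n : ι → ℤ} : content n = 0 ↔ n = 0 := by
  simp [content, Finset.gcd_eq_zero_iff, funext_iff]

theorem natCast_content_dvd (n : ι → ℤ) (i : ι) : (content n : ℤ) ∣ n i :=
  Int.natCast_dvd.2 (gcd_dvd (mem_univ i))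

theorem content_nsmul_div_content (n : ι → ℤ) : content n • (fun i => n i / content n) = n :=
  funext fun i => by simp [Int.mul_ediv_cancel' (natCast_content_dvd n i)]

theorem content_div_content {n : ι → ℤ} (hn : n ≠ 0) :
    content (fun i => n i / content n) = 1 := by
  have := content_nsmul (content n) fun i => n i / content n
  rw [content_nsmul_div_content] at this
  exact (mul_eq_left₀ (mt content_eq_zero_iff.1 hn)).1 this.symm

def nsmulPrimitiveEquiv : ℕ+ × {p : ι → ℤ // content p = 1} ≃ {n : ι → ℤ // n ≠ 0} where
  toFun x := ⟨(x.1 : ℕ) • x.2.1, fun h => by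
    have := congrArg content h
    rw [content_nsmul, x.2.2, mul_one, content_eq_zero_iff.2 rfl] at this
    exact x.1.ne_zero this⟩
  invFun n := (⟨content n.1, Nat.pos_of_ne_zero (mt content_eq_zero_iff.1 n.2)⟩,
    ⟨fun i => n.1 i / content n.1, content_div_content n.2⟩)
  left_inv := by
    rintro ⟨d, p, hp⟩
    have hd : content ((d : ℕ) • p) = d := by rw [content_nsmul, hp, mul_one]
    ext i
    · exact PNat.eq hd
    · show ((d : ℕ) • p) i / (content ((d : ℕ) • p) : ℤ) = p i
      rw [hd, Pi.smul_apply, nsmul_eq_mul]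
      exact Int.mul_ediv_cancel_left _ (Int.natCast_ne_zero.2 d.ne_zero)
  right_inv n := Subtype.ext (content_nsmul_div_content n.1)

theorem tsum_moebius_mul_tsum_ne_zero {𝕜 : Type*} [NormedField 𝕜] [CompleteSpace 𝕜]
    (G : ℕ+ → (ι → ℤ) → 𝕜) (hG : ∀ (m d : ℕ+) p, G m ((d : ℕ) • p) = G (m * d) p)
    (hsum : Summable fun x : {p : ι → ℤ // content p = 1} × (ℕ+ × ℕ+) =>
      ((μ x.2.1 : ℤ) : 𝕜) * G (x.2.1 * x.2.2) x.1) :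
    ∑' m : ℕ+, ((μ m : ℤ) : 𝕜) * ∑' n : {n : ι → ℤ // n ≠ 0}, G m n =
      ∑' p : {p : ι → ℤ // content p = 1}, G 1 p := by
  let e : ℕ+ × (ℕ+ × {p : ι → ℤ // content p = 1}) ≃ {p : ι → ℤ // content p = 1} × (ℕ+ × ℕ+) :=
    (Equiv.prodAssoc _ _ _).symm.trans (Equiv.prodComm _ _)
  calc ∑' m : ℕ+, ((μ m : ℤ) : 𝕜) * ∑' n : {n : ι → ℤ // n ≠ 0}, G m n
      = ∑' (m : ℕ+) (dp : ℕ+ × {p : ι → ℤ // content p = 1}),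
          ((μ m : ℤ) : 𝕜) * G (m * dp.1) dp.2 := by
        refine tsum_congr fun m => ?_
        rw [← tsum_mul_left, ← nsmulPrimitiveEquiv.tsum_eq]
        exact tsum_congr fun dp => congrArg _ (hG m dp.1 dp.2)
    _ = ∑' y : ℕ+ × (ℕ+ × {p : ι → ℤ // content p = 1}),
          ((μ y.1 : ℤ) : 𝕜) * G (y.1 * y.2.1) y.2.2 :=
        (e.summable_iff.2 hsum).tsum_prod.symm
    _ = ∑' x : {p : ι → ℤ // content p = 1} × (ℕ+ × ℕ+),
          ((μ x.2.1 : ℤ) : 𝕜) * G (x.2.1 * x.2.2) x.1 :=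
        e.tsum_eq fun x => ((μ x.2.1 : ℤ) : 𝕜) * G (x.2.1 * x.2.2) x.1
    _ = ∑' p : {p : ι → ℤ // content p = 1}, G 1 p := by
        rw [hsum.tsum_prod]
        exact tsum_congr fun p => tsum_moebius_mul_mul (G · p) (hsum.prod_factor p)

noncomputable def euclNorm (n : ι → ℤ) : ℝ := √(∑ i, (n i : ℝ) ^ 2)

theorem abs_le_euclNorm (n : ι → ℤ) (i : ι) : |(n i : ℝ)| ≤ euclNorm n :=
  Real.abs_le_sqrt <| single_le_sum (f := fun j => (n j : ℝ) ^ 2) (fun _ _ => sq_nonneg _)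
    (mem_univ i)

theorem one_le_euclNorm {n : ι → ℤ} (hn : n ≠ 0) : 1 ≤ euclNorm n := by
  obtain ⟨i, hi⟩ := Function.ne_iff.1 hn
  calc (1 : ℝ) ≤ |(n i : ℝ)| := by exact_mod_cast Int.one_le_abs hi
    _ ≤ euclNorm n := abs_le_euclNorm n i

theorem euclNorm_nsmul (d : ℕ) (n : ι → ℤ) : euclNorm (d • n) = d * euclNorm n := by
  simp only [euclNorm, Pi.smul_apply, nsmul_eq_mul, Int.cast_mul, Int.cast_natCast, mul_pow,
    ← mul_sum]
  rw [Real.sqrt_mul (sq_nonneg _), Real.sqrt_sq d.cast_nonneg]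

theorem sum_abs_le_card_mul_euclNorm (n : ι → ℤ) :
    ∑ i, |(n i : ℝ)| ≤ Fintype.card ι * euclNorm n := by
  simpa using sum_le_sum fun i (_ : i ∈ univ) => abs_le_euclNorm n i

-- `card ι + 1` rather than `card ι`, which may be `0`
theorem summableExpNeg_euclNorm : SummableExpNeg (euclNorm : (ι → ℤ) → ℝ) :=
  summableExpNeg_sum_abs.of_le (a := (Fintype.card ι + 1 : ℝ)⁻¹) (by positivity) fun n => by
    rw [inv_mul_le_iff₀ (by positivity)]
    exact (sum_abs_le_card_mul_euclNorm n).trans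
      (mul_le_mul_of_nonneg_right (by linarith) (Real.sqrt_nonneg _))

noncomputable def weight (α : ι → ℝ) (s : ℂ) (n : ι → ℤ) : ℂ :=
  cexp (2 * Real.pi * I * ∑ i, (n i : ℂ) * (α i : ℂ) - s * euclNorm n)

theorem norm_weight (α : ι → ℝ) (s : ℂ) (n : ι → ℤ) :
    ‖weight α s n‖ = Real.exp (-(s.re * euclNorm n)) := by
  rw [weight, Complex.norm_exp]
  congr 1
  simp [Complex.mul_re, Complex.re_sum]

theorem weight_nsmul (α : ι → ℝ) (s : ℂ) (d : ℕ) (n : ι → ℤ) :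
    weight α s (d • n) = weight α s n ^ d := by
  rw [weight, weight, ← Complex.exp_nat_mul, euclNorm_nsmul]
  simp only [Pi.smul_apply, nsmul_eq_mul, Int.cast_mul, Int.cast_natCast, mul_assoc, ← mul_sum]
  push_cast
  ring_nf

theorem weight_pow (α : ι → ℝ) (s : ℂ) (n : ι → ℤ) (k : ℕ) :
    weight α s n ^ k =
      cexp (2 * Real.pi * I * k * ∑ i, (n i : ℂ) * (α i : ℂ)) * cexp (-s * k * euclNorm n) := by
  rw [weight, ← Complex.exp_nat_mul, ← Complex.exp_add]
  ring_nf

end IntVec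

open IntVec

theorem stmt_2_general (ν : ℕ) (α : Fin ν → ℝ) (s : ℂ) (hs : 0 < s.re) :
    (∑' m : ℕ+, ((ArithmeticFunction.moebius (m : ℕ) : ℤ) : ℂ) *
        ∑' n : {n : Fin ν → ℤ // n ≠ 0}, ∑' ℓ : ℕ+,
          (((ℓ : ℕ) : ℂ))⁻¹ *
            Complex.exp (2 * Real.pi * Complex.I * ((ℓ : ℕ) : ℂ) * ((m : ℕ) : ℂ) *
              (∑ i, ((n : Fin ν → ℤ) i : ℂ) * (α i : ℂ))) *
            Complex.exp (-((m : ℕ) : ℂ) * s * ((ℓ : ℕ) : ℂ) *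
              ((Real.sqrt (∑ i, (((n : Fin ν → ℤ) i : ℝ)) ^ 2) : ℝ) : ℂ))) =
      ∑' p : {p : Fin ν → ℤ // (Finset.univ.gcd fun i => (p i).natAbs) = 1}, ∑' ℓ : ℕ+,
        (((ℓ : ℕ) : ℂ))⁻¹ *
          Complex.exp (2 * Real.pi * Complex.I * ((ℓ : ℕ) : ℂ) *
            (∑ i, ((p : Fin ν → ℤ) i : ℂ) * (α i : ℂ))) *
          Complex.exp (-s * ((ℓ : ℕ) : ℂ) *
            ((Real.sqrt (∑ i, (((p : Fin ν → ℤ) i : ℝ)) ^ 2) : ℝ) : ℂ)) := by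
  have hsum := summable_moebius_mul_negLogOneSub_pow
    (q := fun p : {p : Fin ν → ℤ // content p = 1} => weight α s p.1) (φ := fun p => euclNorm p.1)
    hs (summableExpNeg_euclNorm.comp_injective Subtype.val_injective)
    (fun p => one_le_euclNorm fun h => one_ne_zero (p.2.symm.trans (content_eq_zero_iff.2 h)))
    fun p => (norm_weight α s p.1).le
  have key := tsum_moebius_mul_tsum_ne_zero (fun m n => negLogOneSub (weight α s n ^ (m : ℕ)))
    (fun m d p => by rw [weight_nsmul, ← pow_mul, mul_comm, PNat.mul_coe]) hsum
  simp only [negLogOneSub, PNat.one_coe, pow_one] at key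
  convert key using 1
  · refine tsum_congr fun m => congrArg _ (tsum_congr fun n => tsum_congr fun ℓ => ?_)
    rw [mul_assoc, ← pow_mul, weight_pow, euclNorm]
    push_cast
    ring_nf
  · exact tsum_congr fun p => tsum_congr fun ℓ => by rw [mul_assoc, weight_pow]; rfl

/-- Möbius inversion: `log L_{√+²}(s,α) = Σ_m μ(m) log G(ms, mα)`. -/
theorem stmt_2 (ν : ℕ) (hν : 2 ≤ ν) (α : Fin ν → ℝ) (s : ℂ) (hs : 0 < s.re) :
    (∑' m : ℕ+, ((ArithmeticFunction.moebius (m : ℕ) : ℤ) : ℂ) *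
        ∑' n : {n : Fin ν → ℤ // n ≠ 0}, ∑' ℓ : ℕ+,
          (((ℓ : ℕ) : ℂ))⁻¹ *
            Complex.exp (2 * Real.pi * Complex.I * ((ℓ : ℕ) : ℂ) * ((m : ℕ) : ℂ) *
              (∑ i, ((n : Fin ν → ℤ) i : ℂ) * (α i : ℂ))) *
            Complex.exp (-((m : ℕ) : ℂ) * s * ((ℓ : ℕ) : ℂ) *
              ((Real.sqrt (∑ i, (((n : Fin ν → ℤ) i : ℝ)) ^ 2) : ℝ) : ℂ))) =
      ∑' p : {p : Fin ν → ℤ // (Finset.univ.gcd fun i => (p i).natAbs) = 1}, ∑' ℓ : ℕ+,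
        (((ℓ : ℕ) : ℂ))⁻¹ *
          Complex.exp (2 * Real.pi * Complex.I * ((ℓ : ℕ) : ℂ) *
            (∑ i, ((p : Fin ν → ℤ) i : ℂ) * (α i : ℂ))) *
          Complex.exp (-s * ((ℓ : ℕ) : ℂ) *
            ((Real.sqrt (∑ i, (((p : Fin ν → ℤ) i : ℝ)) ^ 2) : ℝ) : ℂ)) :=
  stmt_2_general ν α s hs
end

section
/- For integers ℓ ≥ 1 and 1 ≤ k ≤ ℓ, define c^{(ℓ)}_0 = 1 and c^{(ℓ)}_k = (1/(2^k k!)) · Π_{j=1-k}^{k} (ℓ + j). Then the recursion c^{(ℓ)}_k − c^{(ℓ−1)}_k = (ℓ − k + 1) · c^{(ℓ)}_{k−1} holds for all 1 ≤ k ≤ ℓ, where c^{(ℓ−1)}_k is interpreted as 0 when k > ℓ−1, and c^{(0)}_0 = 1. -/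
open scoped BigOperators

/-- The coefficients `c^{(ℓ)}_k`: `c^{(ℓ)}_0 = 1` and
`c^{(ℓ)}_k = (1/(2^k k!)) · Π_{j=1-k}^{k} (ℓ + j)` for `k ≥ 1`. -/
noncomputable def cCoeff (ℓ k : ℕ) : ℚ :=
  if k = 0 then 1
  else (1 / (2 ^ k * (k.factorial : ℚ))) *
    ∏ j ∈ Finset.Icc (1 - (k : ℤ)) (k : ℤ), ((ℓ : ℚ) + (j : ℚ))

lemma Icc_int_insert_top (a b : ℤ) (h : a ≤ b + 1) :
    Finset.Icc a (b + 1) = insert (b + 1) (Finset.Icc a b) := by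
  ext x
  simp only [Finset.mem_Icc, Finset.mem_insert]
  omega

lemma prod_Icc_int (f : ℤ → ℚ) (a : ℤ) (n : ℕ) :
    ∏ j ∈ Finset.Icc a (a + (n : ℤ)), f j = ∏ i ∈ Finset.range (n + 1), f (a + (i : ℤ)) := by
  induction n with
  | zero => simp
  | succ n ih =>
    have h1 : a + ((n + 1 : ℕ) : ℤ) = (a + (n : ℤ)) + 1 := by push_cast; ring
    rw [h1, Icc_int_insert_top a (a + (n : ℤ)) (by omega), Finset.prod_insert (by
      simp only [Finset.mem_Icc]; omega), ih,
      Finset.prod_range_succ (fun i : ℕ => f (a + (i : ℤ))) (n + 1)]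
    rw [show (((n + 1 : ℕ)) : ℤ) = (n : ℤ) + 1 from by push_cast; ring, add_assoc]
    exact mul_comm _ _

/-- The product rewritten over a `Finset.range`. -/
lemma cCoeff_eq (ℓ k : ℕ) :
    cCoeff ℓ k = (1 / (2 ^ k * (k.factorial : ℚ))) *
      ∏ i ∈ Finset.range (2 * k), ((ℓ : ℚ) + 1 - (k : ℚ) + (i : ℚ)) := by
  rcases Nat.eq_zero_or_pos k with hk | hk
  · subst hk; simp [cCoeff]
  · rw [cCoeff, if_neg (by omega)]
    congr 1
    have hend : (1 - (k : ℤ)) + ((2 * k - 1 : ℕ) : ℤ) = (k : ℤ) := by omega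
    have hp := prod_Icc_int (fun j => ((ℓ : ℚ) + (j : ℚ))) (1 - (k : ℤ)) (2 * k - 1)
    rw [hend] at hp
    rw [hp, show 2 * k - 1 + 1 = 2 * k from by omega]
    refine Finset.prod_congr rfl fun i _ => ?_
    push_cast
    ring

/-- the recursion `c^{(ℓ)}_k − c^{(ℓ−1)}_k = (ℓ − k + 1) c^{(ℓ)}_{k−1}`. -/
theorem stmt_8 (ℓ k : ℕ) (hℓ : 1 ≤ ℓ) (hk1 : 1 ≤ k) (hkℓ : k ≤ ℓ) :
    cCoeff ℓ k - (if k ≤ ℓ - 1 then cCoeff (ℓ - 1) k else 0) =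
      ((ℓ : ℚ) - (k : ℚ) + 1) * cCoeff ℓ (k - 1) := by
  have hℓ1 : ((ℓ - 1 : ℕ) : ℚ) = (ℓ : ℚ) - 1 := by
    push_cast [Nat.cast_sub hℓ]; ring
  have hk1' : ((k - 1 : ℕ) : ℚ) = (k : ℚ) - 1 := by
    push_cast [Nat.cast_sub hk1]; ring
  -- replace the `if` by `cCoeff (ℓ-1) k` (when `k = ℓ` the latter vanishes)
  have hite : (if k ≤ ℓ - 1 then cCoeff (ℓ - 1) k else 0) = cCoeff (ℓ - 1) k := by
    by_cases h : k ≤ ℓ - 1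
    · rw [if_pos h]
    · rw [if_neg h]
      have hkeq : k = ℓ := by omega
      symm
      rw [cCoeff_eq]
      have : ∏ i ∈ Finset.range (2 * k), (((ℓ - 1 : ℕ) : ℚ) + 1 - (k : ℚ) + (i : ℚ)) = 0 := by
        apply Finset.prod_eq_zero (Finset.mem_range.mpr (by omega : 0 < 2 * k))
        rw [hℓ1, hkeq]
        push_cast
        ring
      rw [this, mul_zero]
  rw [hite, cCoeff_eq, cCoeff_eq, cCoeff_eq, hℓ1, hk1']
  -- set up notation
  obtain ⟨n, rfl⟩ : ∃ n, k = n + 1 := ⟨k - 1, by omega⟩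
  set x : ℚ := (ℓ : ℚ) + 1 - ((n : ℚ) + 1) with hx
  have hcast : ((n + 1 : ℕ) : ℚ) = (n : ℚ) + 1 := by push_cast; ring
  have h2k : 2 * (n + 1) = (2 * n + 1) + 1 := by omega
  have h2k' : n + 1 - 1 = n := by omega
  -- the three products
  have hA : ∏ i ∈ Finset.range (2 * (n + 1)), ((ℓ : ℚ) + 1 - ((n + 1 : ℕ) : ℚ) + (i : ℚ))
      = (∏ i ∈ Finset.range (2 * n + 1), (x + (i : ℚ))) * (x + (2 * n + 1 : ℚ)) := by
    rw [h2k, Finset.prod_range_succ]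
    congr 1
    · exact Finset.prod_congr rfl fun i _ => by rw [hcast]
    · rw [hcast]; push_cast; ring
  have hB : ∏ i ∈ Finset.range (2 * (n + 1)), ((ℓ : ℚ) - 1 + 1 - ((n + 1 : ℕ) : ℚ) + (i : ℚ))
      = (∏ i ∈ Finset.range (2 * n + 1), (x + (i : ℚ))) * (x - 1) := by
    rw [h2k, Finset.prod_range_succ']
    congr 1
    · refine Finset.prod_congr rfl fun i _ => ?_
      rw [hcast]; push_cast; ring
    · rw [hcast]; push_cast; ring
  have hM : ∏ i ∈ Finset.range (2 * n + 1), (x + (i : ℚ))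
      = x * ∏ i ∈ Finset.range (2 * n), ((ℓ : ℚ) + 1 - (((n + 1 : ℕ) : ℚ) - 1) + (i : ℚ)) := by
    rw [Finset.prod_range_succ', mul_comm]
    congr 1
    · norm_num
    · refine Finset.prod_congr rfl fun i _ => ?_
      rw [hcast]; push_cast; ring
  rw [h2k', hA, hB, hM]
  have hfac : ((n + 1).factorial : ℚ) = ((n : ℚ) + 1) * (n.factorial : ℚ) := by
    rw [Nat.factorial_succ]; push_cast; ring
  have hpow : (2 : ℚ) ^ (n + 1) = 2 * 2 ^ n := by ring
  have hfacne : (n.factorial : ℚ) ≠ 0 := Nat.cast_ne_zero.mpr n.factorial_ne_zero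
  have hn1ne : ((n : ℚ) + 1) ≠ 0 := by positivity
  have hpowne : (2 : ℚ) ^ n ≠ 0 := by positivity
  have hx' : (ℓ : ℚ) - ((n + 1 : ℕ) : ℚ) + 1 = x := by rw [hcast, hx]; ring
  rw [hx', hfac, hpow]
  field_simp
  ring
end

section
/- Let ν ≥ 1 be an integer and x ∈ ℝ. For every complex s with Re(s) > ν/2, Re(s) > (ν − x)/2, and Re(x + 2s) > 1, the Dirichlet series identity ( Σ_{n=1}^∞ M_ν(n,x) n^{-s} ) · ζ(2s) = ζ(x + 2s) · ( Σ_{n=1}^∞ r_ν(n) n^{-s} ) holds, where all series converge absolutely and ζ is the Riemann zeta function. -/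
/-!
Every nonzero `m ∈ ℤ^ν` is uniquely `k • u` with `k = gcd m ≥ 1` and `u` primitive, and then
`|m|² = k² |u|²`. Hence `∑_{m ≠ 0} gcd(m)^{-w} |m|^{-2s} = ζ(w + 2s) · ∑_{u primitive} |u|^{-2s}`.
Grouping lattice points by `|m|² = n`, the two Dirichlet series of the identity are this lattice
sum for `w = x` and for `w = 0`, so both sides equal `ζ(x + 2s) ζ(2s) ∑_{u primitive} |u|^{-2s}`.
The sum over primitive vectors converges absolutely because the Epstein series of `ℤ^ν` does.
-/

/-- The arithmetic function `M_ν(n,x) = Σ_{m ∈ ℤ^ν, |m|² = n} gcd(m)^{-x}`. -/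
noncomputable def Mfun (ν : ℕ) (x : ℝ) (n : ℕ) : ℝ :=
  ∑' m : {m : Fin ν → ℤ // ∑ i, (m i) ^ 2 = (n : ℤ)},
    (((Finset.univ.gcd fun i => ((m : Fin ν → ℤ) i).natAbs) : ℕ) : ℝ) ^ (-x)

/-- The number of representations of `n` as a sum of `ν` squares. -/
noncomputable def rfun (ν : ℕ) (n : ℕ) : ℕ :=
  Nat.card {m : Fin ν → ℤ // ∑ i, (m i) ^ 2 = (n : ℤ)}

lemma hasSum_riemannZeta_pnat {z : ℂ} (hz : 1 < z.re) :
    HasSum (fun k : ℕ+ => ((k : ℕ) : ℂ) ^ (-z)) (riemannZeta z) := by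
  have h : HasSum (fun k : ℕ+ => LSeries.term 1 z k) (riemannZeta z) :=
    hasSum_pnat_iff.mpr (by rw [LSeries.term_zero, add_zero]; exact LSeriesHasSum_one hz)
  refine h.congr_fun fun k => ?_
  simp [LSeries.term, Complex.cpow_neg]

lemma summable_norm_pnat_cpow_neg {z : ℂ} (hz : 1 < z.re) :
    Summable fun k : ℕ+ => ‖((k : ℕ) : ℂ) ^ (-z)‖ := by
  have h : Summable fun n : ℕ => (n : ℝ) ^ (-z.re) := Real.summable_nat_rpow.mpr (by linarith)
  refine (summable_pnat_iff_summable_nat.mpr h).congr fun k => ?_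
  rw [Complex.norm_natCast_cpow_of_pos k.pos, Complex.neg_re]

namespace LatticePoint

variable {ι : Type*} [Fintype ι]

def normSq (m : ι → ℤ) : ℕ := ∑ i, (m i).natAbs ^ 2

def content (m : ι → ℤ) : ℕ := Finset.univ.gcd fun i => (m i).natAbs

def primitivePart (m : ι → ℤ) : ι → ℤ := fun i => m i / content m

lemma natCast_normSq (m : ι → ℤ) : (normSq m : ℤ) = ∑ i, m i ^ 2 := by
  simp [normSq]

lemma normSq_ne_zero {m : ι → ℤ} (hm : m ≠ 0) : normSq m ≠ 0 := by
  contrapose! hm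
  ext i
  simp_all [normSq, Finset.sum_eq_zero_iff]

lemma normSq_smul (k : ℕ) (m : ι → ℤ) : normSq ((k : ℤ) • m) = k ^ 2 * normSq m := by
  simp [normSq, Finset.mul_sum, Int.natAbs_mul, mul_pow]

lemma content_smul (k : ℕ) (m : ι → ℤ) : content ((k : ℤ) • m) = k * content m := by
  simp [content, Int.natAbs_mul, Finset.gcd_mul_left]

lemma content_eq_zero {m : ι → ℤ} : content m = 0 ↔ m = 0 := by
  simp [content, Finset.gcd_eq_zero_iff, funext_iff]

lemma content_smul_primitivePart (m : ι → ℤ) : (content m : ℤ) • primitivePart m = m := by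
  ext i
  refine Int.mul_ediv_cancel' (Int.natCast_dvd.mpr ?_)
  exact Finset.gcd_dvd (f := fun i => (m i).natAbs) (Finset.mem_univ i)

lemma content_primitivePart {m : ι → ℤ} (hm : m ≠ 0) : content (primitivePart m) = 1 := by
  have h := congrArg content (content_smul_primitivePart m)
  rw [content_smul] at h
  exact (Nat.mul_eq_left (mt content_eq_zero.mp hm)).mp h

lemma primitivePart_smul {u : ι → ℤ} (hu : content u = 1) {k : ℕ} (hk : k ≠ 0) :
    primitivePart ((k : ℤ) • u) = u := by
  ext i
  rw [primitivePart, content_smul, hu, mul_one, Pi.smul_apply, smul_eq_mul,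
    Int.mul_ediv_cancel_left _ (Int.natCast_ne_zero.mpr hk)]

lemma smul_ne_zero_of_content_eq_one {u : ι → ℤ} (hu : content u = 1) {k : ℕ} (hk : k ≠ 0) :
    (k : ℤ) • u ≠ 0 := by
  rw [Ne, ← content_eq_zero, content_smul, hu, mul_one]
  exact hk

def smulPrimitiveEquiv : ℕ+ × {u : ι → ℤ // content u = 1} ≃ {m : ι → ℤ // m ≠ 0} where
  toFun p := ⟨((p.1 : ℕ) : ℤ) • p.2.1, smul_ne_zero_of_content_eq_one p.2.2 p.1.ne_zero⟩
  invFun m := (⟨content m.1, Nat.pos_of_ne_zero (mt content_eq_zero.mp m.2)⟩,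
    ⟨primitivePart m.1, content_primitivePart m.2⟩)
  left_inv := by
    rintro ⟨k, u, hu⟩
    refine Prod.ext (PNat.coe_injective ?_) (Subtype.ext ?_)
    · exact (content_smul _ u).trans (by rw [hu, mul_one])
    · exact primitivePart_smul hu k.ne_zero
  right_inv m := Subtype.ext (content_smul_primitivePart m.1)

lemma summable_normSq_rpow_neg {σ : ℝ} (hσ : (Fintype.card ι : ℝ) < 2 * σ) :
    Summable fun m : ι → ℤ => (normSq m : ℝ) ^ (-σ) := by
  let b := (EuclideanSpace.basisFun ι ℝ).toBasis
  let e := (b.restrictScalars ℤ).equivFun.symm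
  have hL := ZLattice.summable_norm_rpow (Submodule.span ℤ (Set.range b)) (-(2 * σ))
    (by rw [Module.finrank_eq_card_basis (b.restrictScalars ℤ)]; linarith)
  have he : ∀ m, (e m : EuclideanSpace ℝ ι) = WithLp.toLp 2 fun i => (m i : ℝ) := by
    intro m
    classical
    ext i
    rw [Module.Basis.equivFun_symm_apply, Submodule.coe_sum]
    simp only [Submodule.coe_smul, Module.Basis.restrictScalars_apply]
    simp [b, Pi.single_apply]
  have hnorm : ∀ m, ‖e m‖ ^ 2 = normSq m := by
    intro m
    rw [show ‖e m‖ = ‖(e m : EuclideanSpace ℝ ι)‖ from rfl, EuclideanSpace.norm_sq_eq, he]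
    simp [normSq]
  refine (hL.comp_injective e.injective).congr fun m => ?_
  rw [Function.comp_apply, ← hnorm, ← Real.rpow_natCast, ← Real.rpow_mul (norm_nonneg _)]
  norm_num

lemma content_cpow_mul_normSq_cpow_smul (w s : ℂ) {k : ℕ} (hk : k ≠ 0) {u : ι → ℤ}
    (hu : content u = 1) :
    (content ((k : ℤ) • u) : ℂ) ^ (-w) * (normSq ((k : ℤ) • u) : ℂ) ^ (-s) =
      (k : ℂ) ^ (-(w + 2 * s)) * (normSq u : ℂ) ^ (-s) := by
  rw [content_smul, hu, mul_one, normSq_smul, Nat.cast_mul, Complex.natCast_mul_natCast_cpow,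
    Nat.cast_pow, ← Complex.natCast_cpow_natCast_mul, ← mul_assoc,
    ← Complex.cpow_add _ _ (Nat.cast_ne_zero.mpr hk)]
  congr 2
  push_cast
  ring

theorem hasSum_content_cpow_mul_normSq_cpow {w s : ℂ} (hw : 1 < (w + 2 * s).re)
    (hs : (Fintype.card ι : ℝ) < 2 * s.re) :
    HasSum (fun m : {m : ι → ℤ // m ≠ 0} => (content m.1 : ℂ) ^ (-w) * (normSq m.1 : ℂ) ^ (-s))
      (riemannZeta (w + 2 * s) * ∑' u : {u : ι → ℤ // content u = 1}, (normSq u.1 : ℂ) ^ (-s)) := by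
  have hs_pos : 0 < s.re := by linarith [(Fintype.card ι).cast_nonneg (α := ℝ)]
  have hP : Summable fun u : {u : ι → ℤ // content u = 1} => ‖(normSq u.1 : ℂ) ^ (-s)‖ := by
    refine ((summable_normSq_rpow_neg hs).comp_injective Subtype.val_injective).congr fun u => ?_
    rw [Complex.norm_natCast_cpow_of_re_ne_zero _ (by rw [Complex.neg_re]; linarith),
      Complex.neg_re, Function.comp_apply]
  have hmul := summable_mul_of_summable_norm (R := ℂ)
    (f := fun k : ℕ+ => ((k : ℕ) : ℂ) ^ (-(w + 2 * s)))
    (g := fun u : {u : ι → ℤ // content u = 1} => (normSq u.1 : ℂ) ^ (-s))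
    (summable_norm_pnat_cpow_neg hw) hP
  have hprod := (hasSum_riemannZeta_pnat hw).mul hP.of_norm.hasSum hmul
  rw [← smulPrimitiveEquiv.hasSum_iff]
  refine hprod.congr_fun fun ⟨k, u, hu⟩ => ?_
  exact content_cpow_mul_normSq_cpow_smul w s k.ne_zero hu

lemma normSq_eq_of_sum_sq_eq {m : ι → ℤ} {n : ℕ} (h : ∑ i, m i ^ 2 = (n : ℤ)) : normSq m = n := by
  rw [← natCast_normSq] at h
  exact_mod_cast h

def sphereSigmaEquiv :
    (Σ n : ℕ+, {m : ι → ℤ // ∑ i, m i ^ 2 = ((n : ℕ) : ℤ)}) ≃ {m : ι → ℤ // m ≠ 0} where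
  toFun p := ⟨p.2.1, fun h0 => p.1.ne_zero <| by
    rw [← normSq_eq_of_sum_sq_eq p.2.2, h0]
    simp [normSq]⟩
  invFun m :=
    ⟨⟨normSq m.1, Nat.pos_of_ne_zero (normSq_ne_zero m.2)⟩, ⟨m.1, (natCast_normSq m.1).symm⟩⟩
  left_inv p := Sigma.subtype_ext (PNat.coe_injective (normSq_eq_of_sum_sq_eq p.2.2)) rfl
  right_inv m := rfl

lemma tsum_pnat_tsum_sphere_mul_cpow (φ : (ι → ℤ) → ℂ) (s : ℂ)
    (hφ : Summable fun m : {m : ι → ℤ // m ≠ 0} => φ m.1 * (normSq m.1 : ℂ) ^ (-s)) :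
    ∑' n : ℕ+, (∑' m : {m : ι → ℤ // ∑ i, m i ^ 2 = ((n : ℕ) : ℤ)}, φ m.1) * ((n : ℕ) : ℂ) ^ (-s) =
      ∑' m : {m : ι → ℤ // m ≠ 0}, φ m.1 * (normSq m.1 : ℂ) ^ (-s) := by
  set f : {m : ι → ℤ // m ≠ 0} → ℂ := fun m => φ m.1 * (normSq m.1 : ℂ) ^ (-s)
  have hf : Summable fun p => f (sphereSigmaEquiv p) := sphereSigmaEquiv.summable_iff.mpr hφ
  rw [← sphereSigmaEquiv.tsum_eq f, hf.tsum_sigma]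
  refine tsum_congr fun n => ?_
  rw [← tsum_mul_right]
  refine tsum_congr fun m => ?_
  change _ = φ m.1 * (normSq m.1 : ℂ) ^ (-s)
  rw [normSq_eq_of_sum_sq_eq m.2]

end LatticePoint

theorem stmt_14_general (ν : ℕ) (hν : 1 ≤ ν) (x : ℝ) (s : ℂ)
    (h1 : (ν : ℝ) / 2 < s.re) (h3 : 1 < x + 2 * s.re) :
    (∑' n : ℕ+, ((Mfun ν x (n : ℕ) : ℝ) : ℂ) * ((n : ℕ) : ℂ) ^ (-s)) *
        riemannZeta (2 * s) =
      riemannZeta ((x : ℂ) + 2 * s) *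
        ∑' n : ℕ+, ((rfun ν (n : ℕ) : ℕ) : ℂ) * ((n : ℕ) : ℂ) ^ (-s) := by
  have hs : (Fintype.card (Fin ν) : ℝ) < 2 * s.re := by rw [Fintype.card_fin]; linarith
  have hν' : (1 : ℝ) ≤ ν := by exact_mod_cast hν
  have hM := LatticePoint.hasSum_content_cpow_mul_normSq_cpow (w := (x : ℂ)) (by simpa using h3) hs
  have hr := LatticePoint.hasSum_content_cpow_mul_normSq_cpow (w := 0)
    (by simp; linarith) hs
  simp only [neg_zero, Complex.cpow_zero, one_mul, zero_add] at hr
  have hMfun : ∀ n : ℕ, (Mfun ν x n : ℂ) = ∑' m : {m : Fin ν → ℤ // ∑ i, m i ^ 2 = (n : ℤ)},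
      (LatticePoint.content m.1 : ℂ) ^ (-(x : ℂ)) := by
    intro n
    rw [Mfun, Complex.ofReal_tsum]
    exact tsum_congr fun m => by rw [Complex.ofReal_cpow (Nat.cast_nonneg _)]; push_cast; rfl
  have hrfun : ∀ n : ℕ, (rfun ν n : ℂ) = ∑' _m : {m : Fin ν → ℤ // ∑ i, m i ^ 2 = (n : ℤ)}, 1 := by
    simp [rfun, tsum_const]
  simp only [hMfun, hrfun]
  rw [LatticePoint.tsum_pnat_tsum_sphere_mul_cpow
      (fun m => (LatticePoint.content m : ℂ) ^ (-(x : ℂ))) s hM.summable,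
    LatticePoint.tsum_pnat_tsum_sphere_mul_cpow (fun _ => 1) s (by simpa using hr.summable),
    hM.tsum_eq]
  simp only [one_mul, hr.tsum_eq]
  ring

/-- the Dirichlet series identity
`D_ν(s;x) ζ(2s) = ζ(x+2s) Σ r_ν(n) n^{-s}`. -/
theorem stmt_14 (ν : ℕ) (hν : 1 ≤ ν) (x : ℝ) (s : ℂ)
    (h1 : (ν : ℝ) / 2 < s.re) (h2 : ((ν : ℝ) - x) / 2 < s.re) (h3 : 1 < x + 2 * s.re) :
    (∑' n : ℕ+, ((Mfun ν x (n : ℕ) : ℝ) : ℂ) * ((n : ℕ) : ℂ) ^ (-s)) *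
        riemannZeta (2 * s) =
      riemannZeta ((x : ℂ) + 2 * s) *
        ∑' n : ℕ+, ((rfun ν (n : ℕ) : ℕ) : ℂ) * ((n : ℕ) : ℂ) ^ (-s) :=
  stmt_14_general ν hν x s h1 h3
end
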